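/- arXiv:1606.03576 — 2 statements merged into one kernel-verified Lean document; each statement's English description precedes it below -/
import Mathlib

section
/- For every natural number n and complex z, e^{-z} · Σ_{k=0}^∞ k^n z^k / k! equals Σ_{k=0}^n S(n,k) z^k, where S(n,k) are the Stirling numbers of the second kind. (I.e., the two standard definitions of the Touchard polynomial T_n(z) agree.) -/
open scoped Nat

/-- Stirling numbers of the second kind, via the standard recurrence. -/
def stirling2 : ℕ → ℕ → ℕ
  | 0, 0 => 1
  | 0, _ + 1 => 0
  | _ + 1, 0 => 0
  | n + 1, k + 1 => (k + 1) * stirling2 n (k + 1) + stirling2 n k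

lemma stirling2_eq_zero_of_lt : ∀ {n k : ℕ}, n < k → stirling2 n k = 0
  | 0, _ + 1, _ => rfl
  | n + 1, k + 1, h => by
    have h1 : n < k + 1 := by omega
    have h2 : n < k := by omega
    simp [stirling2, stirling2_eq_zero_of_lt h1, stirling2_eq_zero_of_lt h2]

lemma pow_eq_sum_stirling (k n : ℕ) :
    k ^ n = ∑ j ∈ Finset.range (n + 1), stirling2 n j * k.descFactorial j := by
  induction n with
  | zero => simp [stirling2]
  | succ n ih =>
    have key : ∀ j : ℕ, k * k.descFactorial j
        = k.descFactorial (j + 1) + j * k.descFactorial j := by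
      intro j
      rcases le_or_gt j k with h | h
      · rw [Nat.descFactorial_succ, ← Nat.add_mul, Nat.sub_add_cancel h]
      · rw [Nat.descFactorial_of_lt h, Nat.descFactorial_of_lt (by omega)]
        simp
    -- compute the RHS for n+1
    have hA : ∑ j ∈ Finset.range (n + 1), (j + 1) * stirling2 n (j + 1) * k.descFactorial (j + 1)
        = ∑ j ∈ Finset.range (n + 1), j * stirling2 n j * k.descFactorial j := by
      have h1 := Finset.sum_range_succ' (fun j => j * stirling2 n j * k.descFactorial j) (n + 1)
      have h2 := Finset.sum_range_succ (fun j => j * stirling2 n j * k.descFactorial j) (n + 1)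
      simp only [stirling2_eq_zero_of_lt (Nat.lt_succ_self n)] at h2
      simp only [Nat.zero_mul, Nat.add_zero, Nat.mul_zero, Nat.zero_mul] at h1 h2
      omega
    refine Eq.symm ?_
    calc ∑ j ∈ Finset.range (n + 1 + 1), stirling2 (n + 1) j * k.descFactorial j
        = ∑ j ∈ Finset.range (n + 1), stirling2 (n + 1) (j + 1) * k.descFactorial (j + 1) := by
          rw [Finset.sum_range_succ']
          simp [stirling2]
      _ = ∑ j ∈ Finset.range (n + 1),
            ((j + 1) * stirling2 n (j + 1) * k.descFactorial (j + 1)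
              + stirling2 n j * k.descFactorial (j + 1)) := by
          apply Finset.sum_congr rfl
          intro j _
          simp [stirling2, Nat.add_mul]
      _ = ∑ j ∈ Finset.range (n + 1), (j + 1) * stirling2 n (j + 1) * k.descFactorial (j + 1)
            + ∑ j ∈ Finset.range (n + 1), stirling2 n j * k.descFactorial (j + 1) := by
          rw [Finset.sum_add_distrib]
      _ = ∑ j ∈ Finset.range (n + 1), j * stirling2 n j * k.descFactorial j
            + ∑ j ∈ Finset.range (n + 1), stirling2 n j * k.descFactorial (j + 1) := by
          rw [hA]
      _ = ∑ j ∈ Finset.range (n + 1), stirling2 n j * (k * k.descFactorial j) := by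
          rw [← Finset.sum_add_distrib]
          apply Finset.sum_congr rfl
          intro j _
          rw [key j]
          ring
      _ = k ^ (n + 1) := by
          rw [pow_succ, ih, Finset.sum_mul]
          apply Finset.sum_congr rfl
          intro j _
          ring

lemma touchard_summable (z : ℂ) (j : ℕ) :
    Summable (fun k : ℕ => (Nat.descFactorial k j : ℂ) * z ^ k / (k ! : ℂ)) := by
  have hshift : ∀ m : ℕ,
      (Nat.descFactorial (j + m) j : ℂ) * z ^ (j + m) / ((j + m)! : ℂ)
        = z ^ j * (z ^ m / (m ! : ℂ)) := by
    intro m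
    have hnat : (m)! * Nat.descFactorial (j + m) j = (j + m)! := by
      have := Nat.factorial_mul_descFactorial (Nat.le_add_right j m)
      simpa using this
    have hm : ((m)! : ℂ) ≠ 0 := by exact_mod_cast (Nat.factorial_ne_zero m)
    have hjm : (((j + m))! : ℂ) ≠ 0 := by exact_mod_cast (Nat.factorial_ne_zero (j + m))
    have hc : ((m)! : ℂ) * (Nat.descFactorial (j + m) j : ℂ) = (((j + m))! : ℂ) := by
      exact_mod_cast hnat
    field_simp
    rw [← hc, pow_add]
    ring
  have hinj : Function.Injective (fun m : ℕ => j + m) := add_right_injective j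
  have hzero : ∀ k : ℕ, k ∉ Set.range (fun m : ℕ => j + m) →
      (Nat.descFactorial k j : ℂ) * z ^ k / (k ! : ℂ) = 0 := by
    intro k hk
    have hlt : k < j := by
      by_contra h
      exact hk ⟨k - j, by show j + (k - j) = k; omega⟩
    rw [Nat.descFactorial_of_lt hlt]
    simp
  rw [← hinj.summable_iff hzero]
  have : Summable (fun m : ℕ => z ^ j * (z ^ m / (m ! : ℂ))) :=
    (NormedSpace.expSeries_div_summable z).mul_left _
  exact this.congr fun m => (hshift m).symm

lemma touchard_tsum (z : ℂ) (j : ℕ) :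
    ∑' k : ℕ, (Nat.descFactorial k j : ℂ) * z ^ k / (k ! : ℂ) = z ^ j * Complex.exp z := by
  have hshift : ∀ m : ℕ,
      (Nat.descFactorial (j + m) j : ℂ) * z ^ (j + m) / ((j + m)! : ℂ)
        = z ^ j * (z ^ m / (m ! : ℂ)) := by
    intro m
    have hnat : (m)! * Nat.descFactorial (j + m) j = (j + m)! := by
      have := Nat.factorial_mul_descFactorial (Nat.le_add_right j m)
      simpa using this
    have hm : ((m)! : ℂ) ≠ 0 := by exact_mod_cast (Nat.factorial_ne_zero m)
    have hjm : (((j + m))! : ℂ) ≠ 0 := by exact_mod_cast (Nat.factorial_ne_zero (j + m))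
    have hc : ((m)! : ℂ) * (Nat.descFactorial (j + m) j : ℂ) = (((j + m))! : ℂ) := by
      exact_mod_cast hnat
    field_simp
    rw [← hc, pow_add]
    ring
  have hinj : Function.Injective (fun m : ℕ => j + m) := add_right_injective j
  have hsupp : Function.support
      (fun k : ℕ => (Nat.descFactorial k j : ℂ) * z ^ k / (k ! : ℂ))
        ⊆ Set.range (fun m : ℕ => j + m) := by
    intro k hk
    by_contra h
    have hlt : k < j := by
      by_contra h'
      exact h ⟨k - j, by show j + (k - j) = k; omega⟩
    apply hk
    show (Nat.descFactorial k j : ℂ) * z ^ k / (k ! : ℂ) = 0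
    rw [Nat.descFactorial_of_lt hlt]
    simp
  rw [← hinj.tsum_eq hsupp]
  calc ∑' m : ℕ, (Nat.descFactorial (j + m) j : ℂ) * z ^ (j + m) / ((j + m)! : ℂ)
      = ∑' m : ℕ, z ^ j * (z ^ m / (m ! : ℂ)) := tsum_congr hshift
    _ = z ^ j * ∑' m : ℕ, z ^ m / (m ! : ℂ) := tsum_mul_left
    _ = z ^ j * Complex.exp z := by
        rw [Complex.exp_eq_exp_ℂ, NormedSpace.exp_eq_tsum_div]

/-- The two standard definitions of the Touchard polynomial agree:
`e^{-z} Σ_{k=0}^∞ k^n z^k / k! = Σ_{k=0}^n S(n,k) z^k`. -/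
theorem touchard_series_eq_stirling_sum (n : ℕ) (z : ℂ) :
    Complex.exp (-z) * ∑' k : ℕ, (k : ℂ) ^ n * z ^ k / (k ! : ℂ) =
      ∑ k ∈ Finset.range (n + 1), (stirling2 n k : ℂ) * z ^ k := by
  have hrow : ∀ k : ℕ, (k : ℂ) ^ n * z ^ k / (k ! : ℂ)
      = ∑ j ∈ Finset.range (n + 1),
          (stirling2 n j : ℂ) * ((Nat.descFactorial k j : ℂ) * z ^ k / (k ! : ℂ)) := by
    intro k
    have hk : ((k : ℂ) ^ n)
        = ∑ j ∈ Finset.range (n + 1), (stirling2 n j : ℂ) * (Nat.descFactorial k j : ℂ) := by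
      exact_mod_cast congrArg (Nat.cast : ℕ → ℂ) (pow_eq_sum_stirling k n)
    rw [hk, Finset.sum_mul, Finset.sum_div]
    apply Finset.sum_congr rfl
    intro j _
    ring
  have htsum : ∑' k : ℕ, (k : ℂ) ^ n * z ^ k / (k ! : ℂ)
      = ∑ j ∈ Finset.range (n + 1), (stirling2 n j : ℂ) * (z ^ j * Complex.exp z) := by
    rw [tsum_congr hrow, Summable.tsum_finsetSum (fun j _ => (touchard_summable z j).mul_left _)]
    apply Finset.sum_congr rfl
    intro j _
    rw [tsum_mul_left, touchard_tsum]
  rw [htsum, Finset.mul_sum]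
  apply Finset.sum_congr rfl
  intro j _
  have : Complex.exp (-z) * Complex.exp z = 1 := by
    rw [← Complex.exp_add]
    simp
  calc Complex.exp (-z) * ((stirling2 n j : ℂ) * (z ^ j * Complex.exp z))
      = (stirling2 n j : ℂ) * z ^ j * (Complex.exp (-z) * Complex.exp z) := by ring
    _ = (stirling2 n j : ℂ) * z ^ j := by rw [this, mul_one]
end

section
/- For every natural number n and complex z, the operator identity T_n(z) = e^{-z} (z d/dz)^n e^z holds, where (z d/dz)^n denotes n-fold application of the operator f ↦ z·f' to the entire function e^z. -/
/-- The Touchard polynomial as a function of a complex variable. -/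
noncomputable def touchard (n : ℕ) (z : ℂ) : ℂ :=
  ∑ k ∈ Finset.range (n + 1), (stirling2 n k : ℂ) * z ^ k

/-- The operator `f ↦ z · f'` acting on functions `ℂ → ℂ`. -/
noncomputable def zDz (f : ℂ → ℂ) : ℂ → ℂ := fun z => z * deriv f z

lemma stirling2_eq_zero : ∀ n k, n < k → stirling2 n k = 0 := by
  intro n
  induction n with
  | zero => intro k h; cases k with
    | zero => omega
    | succ k => rfl
  | succ n ih =>
    intro k h
    cases k with
    | zero => omega
    | succ k =>
      show (k + 1) * stirling2 n (k + 1) + stirling2 n k = 0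
      rw [ih (k+1) (by omega), ih k (by omega)]; ring

noncomputable def touchardP (n : ℕ) : Polynomial ℂ :=
  ∑ k ∈ Finset.range (n + 1), Polynomial.C (stirling2 n k : ℂ) * Polynomial.X ^ k

lemma coeff_touchardP (n m : ℕ) : (touchardP n).coeff m = (stirling2 n m : ℂ) := by
  simp only [touchardP, Polynomial.finset_sum_coeff, Polynomial.coeff_C_mul,
    Polynomial.coeff_X_pow, mul_ite, mul_one, mul_zero]
  rw [Finset.sum_ite_eq (Finset.range (n+1)) m]
  by_cases h : m < n + 1
  · simp [h]
  · simp [h, stirling2_eq_zero n m (by omega)]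

lemma touchardP_succ (n : ℕ) :
    touchardP (n + 1) = Polynomial.X * ((touchardP n).derivative + touchardP n) := by
  ext m
  rw [coeff_touchardP]
  cases m with
  | zero => simp [show stirling2 (n+1) 0 = 0 from rfl]
  | succ j =>
    rw [Polynomial.coeff_X_mul, Polynomial.coeff_add, Polynomial.coeff_derivative,
      coeff_touchardP, coeff_touchardP]
    rw [show stirling2 (n+1) (j+1) = (j + 1) * stirling2 n (j + 1) + stirling2 n j from rfl]
    push_cast
    ring

lemma zDz_iter_exp_eq (n : ℕ) :
    zDz^[n] Complex.exp = fun z => (touchardP n).eval z * Complex.exp z := by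
  induction n with
  | zero =>
    funext z
    simp [touchardP, Polynomial.eval_finset_sum, show stirling2 0 0 = 1 from rfl]
  | succ n ih =>
    rw [Function.iterate_succ_apply', ih]
    funext z
    simp only [zDz]
    rw [deriv_fun_mul (Polynomial.differentiable _ _) (Complex.differentiable_exp _)]
    rw [Polynomial.deriv, Complex.deriv_exp]
    rw [touchardP_succ]
    simp only [Polynomial.eval_mul, Polynomial.eval_add, Polynomial.eval_X]
    ring

/-- `T_n(z) = e^{-z} (z d/dz)^n e^z`. -/
theorem touchard_eq_zDz_iter_exp (n : ℕ) (z : ℂ) :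
    touchard n z = Complex.exp (-z) * (zDz^[n] Complex.exp) z := by
  rw [zDz_iter_exp_eq]
  have : touchard n z = (touchardP n).eval z := by
    simp [touchard, touchardP, Polynomial.eval_finset_sum]
  rw [this]
  show _ = Complex.exp (-z) * (Polynomial.eval z (touchardP n) * Complex.exp z)
  rw [mul_comm (Complex.exp (-z)), mul_assoc, ← Complex.exp_add]
  simp
end
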